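/- Define K : ℝ → ℝ by K(t) = (1/6) e^{−|t|} + e^{−|t|/2} ( (1/6) cos(√3 |t|/2) + (√3/6) sin(√3 |t|/2) ). Then ∫_{−∞}^{∞} K(t) dt = 1 and ∫_{−∞}^{∞} t^k K(t) dt = 0 for k = 1, 2, 3, 4, 5; that is, K is a kernel of order 6. -/

import Mathlib

/-!
With `ω = e^{iπ/3}`, for `u ≥ 0` the kernel is `K(u) = Re (e^{-u}/6 + (ω/3) e^{-ωu})`, a combination
of the decaying exponentials `e^{-λu}` over the roots `λ = 1, ω, ω̄` of `λ⁶ = 1` with `Re λ > 0`.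
Since `K` is even, its odd moments vanish, and the Laplace moments
`∫₀^∞ tⁿ e^{-λt} dt = n!/λ^{n+1}` give, for even `n`,
`∫ tⁿ K(t) dt = 2 n! (1/6 + cos(nπ/3)/3)`,
which is `1` for `n = 0` and `0` for `n = 2, 4` because `cos(2π/3) = cos(4π/3) = -1/2`.
-/

open Real MeasureTheory Set Filter Topology
open Complex (I)
open scoped Complex
open scoped Nat

namespace Complex

lemma norm_ofReal_pow_mul_exp_neg_mul {r : ℂ} (n : ℕ) {t : ℝ} (ht : 0 ≤ t) :
    ‖(t : ℂ) ^ n * cexp (-(r * t))‖ = t ^ n * rexp (-r.re * t) := by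
  simp [norm_exp, abs_of_nonneg ht]

lemma integrableOn_pow_mul_exp_neg_mul_Ioi {r : ℂ} (hr : 0 < r.re) (n : ℕ) :
    IntegrableOn (fun t : ℝ => (t : ℂ) ^ n * cexp (-(r * t))) (Ioi 0) := by
  have hdom : IntegrableOn (fun t : ℝ => t ^ n * rexp (-r.re * t)) (Ioi 0) := by
    refine (integrableOn_rpow_mul_exp_neg_mul_rpow (s := n) (p := 1)
      (by linarith [n.cast_nonneg (α := ℝ)]) one_pos hr).congr_fun (fun t _ => ?_) measurableSet_Ioi
    simp
  refine hdom.mono' (by fun_prop) ((ae_restrict_iff' measurableSet_Ioi).2 (ae_of_all _ ?_))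
  intro t ht
  exact (norm_ofReal_pow_mul_exp_neg_mul n (le_of_lt ht)).le

lemma tendsto_pow_mul_exp_neg_mul_atTop {r : ℂ} (hr : 0 < r.re) (n : ℕ) :
    Tendsto (fun t : ℝ => (t : ℂ) ^ n * cexp (-(r * t))) atTop (𝓝 0) := by
  rw [tendsto_zero_iff_norm_tendsto_zero]
  refine (tendsto_rpow_mul_exp_neg_mul_atTop_nhds_zero n r.re hr).congr' ?_
  filter_upwards [eventually_ge_atTop 0] with t ht
  rw [norm_ofReal_pow_mul_exp_neg_mul n ht, rpow_natCast]

lemma integral_pow_mul_exp_neg_mul_Ioi {r : ℂ} (hr : 0 < r.re) (n : ℕ) :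
    ∫ t : ℝ in Ioi 0, (t : ℂ) ^ n * cexp (-(r * t)) = n ! / r ^ (n + 1) := by
  have hr0 : r ≠ 0 := fun h => by simp [h] at hr
  induction n with
  | zero =>
    simpa [neg_mul, neg_div, div_neg] using integral_exp_mul_complex_Ioi (a := -r) (by simpa) 0
  | succ n ih =>
    have hu : ∀ t : ℝ, HasDerivAt (fun t : ℝ => (t : ℂ) ^ (n + 1)) ((n + 1 : ℕ) * (t : ℂ) ^ n) t :=
      fun t => by simpa using (hasDerivAt_pow (n + 1) (t : ℂ)).comp_ofReal
    have hv : ∀ t : ℝ, HasDerivAt (fun t : ℝ => cexp (-(r * t)) / -r) (cexp (-(r * t))) t := by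
      intro t
      have := ((((hasDerivAt_id' (t : ℂ)).const_mul r).neg.cexp).div_const (-r)).comp_ofReal
      rwa [mul_one, mul_div_cancel_right₀ _ (neg_ne_zero.2 hr0)] at this
    have hu'v_eq : ∀ t : ℝ, (n + 1 : ℕ) * (t : ℂ) ^ n * (cexp (-(r * t)) / -r)
        = -((n + 1 : ℕ) / r) * ((t : ℂ) ^ n * cexp (-(r * t))) := fun t => by
      field_simp
    have hu'v : IntegrableOn ((fun t : ℝ => (n + 1 : ℕ) * (t : ℂ) ^ n) *
        fun t : ℝ => cexp (-(r * t)) / -r) (Ioi 0) :=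
      IntegrableOn.congr_fun ((integrableOn_pow_mul_exp_neg_mul_Ioi hr n).const_mul _)
        (fun t _ => (hu'v_eq t).symm) measurableSet_Ioi
    have hcont : Continuous fun t : ℝ => (t : ℂ) ^ (n + 1) * (cexp (-(r * t)) / -r) := by
      fun_prop
    have parts := integral_Ioi_mul_deriv_eq_deriv_mul (fun t _ => hu t) (fun t _ => hv t)
      (integrableOn_pow_mul_exp_neg_mul_Ioi hr (n + 1)) hu'v
      (by simpa [Pi.mul_def] using (hcont.tendsto 0).mono_left nhdsWithin_le_nhds)
      (by simpa [Pi.mul_def, mul_div_assoc] using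
        (tendsto_pow_mul_exp_neg_mul_atTop hr (n + 1)).div_const (-r))
    simp only [hu'v_eq, integral_const_mul] at parts
    rw [parts, ih, Nat.factorial_succ]
    field_simp
    push_cast
    ring

end Complex

noncomputable def kernelRoot : ℂ := cexp (↑(π / 3) * I)

noncomputable def kernelExp (u : ℝ) : ℂ :=
  1 / 6 * cexp (-u) + kernelRoot / 3 * cexp (-(kernelRoot * u))

lemma kernelRoot_eq : kernelRoot = 1 / 2 + √3 / 2 * I := by
  rw [kernelRoot, Complex.exp_mul_I, ← Complex.ofReal_cos, ← Complex.ofReal_sin, cos_pi_div_three,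
    sin_pi_div_three]
  push_cast
  ring

lemma re_kernelExp (u : ℝ) :
    (kernelExp u).re = 1 / 6 * rexp (-u) + rexp (-u / 2) *
      (1 / 6 * cos (√3 * u / 2) + √3 / 6 * sin (√3 * u / 2)) := by
  simp [kernelExp, kernelRoot_eq, Complex.exp_re, Complex.exp_im, Complex.mul_re, Complex.mul_im]
  ring_nf

lemma re_inv_kernelRoot_pow (n : ℕ) : ((kernelRoot ^ n)⁻¹).re = cos (n * π / 3) := by
  rw [kernelRoot, ← Complex.exp_nat_mul, ← Complex.exp_neg, ← mul_assoc, ← neg_mul]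
  exact_mod_cast (Complex.exp_ofReal_mul_I_re _).trans (by rw [cos_neg, mul_div_assoc])

lemma integral_pow_mul_re_kernelExp (n : ℕ) :
    ∫ t in Ioi (0 : ℝ), t ^ n * (kernelExp t).re = n ! * (1 / 6 + cos (n * π / 3) / 3) := by
  have hroot : 0 < kernelRoot.re := by simp [kernelRoot_eq]
  have hroot0 : kernelRoot ≠ 0 := Complex.exp_ne_zero _
  have hsplit : ∀ t : ℝ, (t : ℂ) ^ n * kernelExp t = 1 / 6 * ((t : ℂ) ^ n * cexp (-(1 * t))) +
      kernelRoot / 3 * ((t : ℂ) ^ n * cexp (-(kernelRoot * t))) := fun t => by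
    rw [kernelExp, one_mul]
    ring
  have h1 := Complex.integrableOn_pow_mul_exp_neg_mul_Ioi (r := 1) (by simp) n
  have h2 := Complex.integrableOn_pow_mul_exp_neg_mul_Ioi hroot n
  have hint : IntegrableOn (fun t : ℝ => (t : ℂ) ^ n * kernelExp t) (Ioi 0) := by
    simp only [hsplit]
    exact (h1.const_mul _).add (h2.const_mul _)
  calc ∫ t in Ioi (0 : ℝ), t ^ n * (kernelExp t).re
      = ∫ t in Ioi (0 : ℝ), ((t : ℂ) ^ n * kernelExp t).re := by
        simp [← Complex.ofReal_pow]
    _ = (∫ t in Ioi (0 : ℝ), (t : ℂ) ^ n * kernelExp t).re := integral_re hint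
    _ = (n ! * (1 / 6 + (kernelRoot ^ n)⁻¹ / 3)).re := by
        simp only [hsplit]
        rw [integral_add (h1.const_mul _) (h2.const_mul _), integral_const_mul, integral_const_mul,
          Complex.integral_pow_mul_exp_neg_mul_Ioi (by simp),
          Complex.integral_pow_mul_exp_neg_mul_Ioi hroot]
        congr 1
        field_simp
        ring
    _ = n ! * (1 / 6 + cos (n * π / 3) / 3) := by
        norm_num [-Complex.inv_re, re_inv_kernelRoot_pow]

lemma integral_pow_mul_comp_abs_of_even (f : ℝ → ℝ) {n : ℕ} (hn : Even n) :
    ∫ t, t ^ n * f |t| = 2 * ∫ t in Ioi 0, t ^ n * f t := by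
  simpa only [hn.pow_abs] using integral_comp_abs (f := fun t => t ^ n * f t)

lemma integral_pow_mul_comp_abs_of_odd (f : ℝ → ℝ) {n : ℕ} (hn : Odd n) :
    ∫ t, t ^ n * f |t| = 0 := by
  have h := integral_neg_eq_self (fun t => t ^ n * f |t|) volume
  simp only [hn.neg_pow, abs_neg, neg_mul, integral_neg] at h
  linarith

lemma cos_two_mul_pi_div_three : cos (2 * π / 3) = -1 / 2 := by
  rw [mul_div_assoc, cos_two_mul, cos_pi_div_three]
  norm_num

lemma cos_four_mul_pi_div_three : cos (4 * π / 3) = -1 / 2 := by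
  rw [show 4 * π / 3 = 2 * (2 * π / 3) by ring, cos_two_mul, cos_two_mul_pi_div_three]
  norm_num

/-- Example 1, `m = 3`: the equivalent kernel
`K(t) = (1/6) e^{−|t|} + e^{−|t|/2} ((1/6) cos(√3|t|/2) + (√3/6) sin(√3|t|/2))`
is a kernel of order 6. -/
theorem stmt_16 (K : ℝ → ℝ)
    (hK : ∀ t : ℝ, K t = 1 / 6 * Real.exp (-|t|) + Real.exp (-|t| / 2) *
      (1 / 6 * Real.cos (Real.sqrt 3 * |t| / 2) +
       Real.sqrt 3 / 6 * Real.sin (Real.sqrt 3 * |t| / 2))) :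
    (∫ t : ℝ, K t) = 1 ∧ ∀ k : ℕ, 1 ≤ k → k ≤ 5 → (∫ t : ℝ, t ^ k * K t) = 0 := by
  obtain rfl : K = fun t => (kernelExp |t|).re := funext fun t => by rw [hK, re_kernelExp]
  have hodd : ∀ n, Odd n → ∫ t, t ^ n * (kernelExp |t|).re = 0 := fun n hn =>
    integral_pow_mul_comp_abs_of_odd (fun t => (kernelExp t).re) hn
  have heven : ∀ n, Even n →
      ∫ t, t ^ n * (kernelExp |t|).re = 2 * (n ! * (1 / 6 + cos (n * π / 3) / 3)) := fun n hn => by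
    rw [integral_pow_mul_comp_abs_of_even (fun t => (kernelExp t).re) hn,
      integral_pow_mul_re_kernelExp]
  refine ⟨by simpa using (heven 0 (by decide)).trans (by norm_num), fun k hk1 hk5 => ?_⟩
  interval_cases k
  · exact hodd 1 (by decide)
  · rw [heven 2 (by decide)]; push_cast; rw [cos_two_mul_pi_div_three]; norm_num
  · exact hodd 3 (by decide)
  · rw [heven 4 (by decide)]; push_cast; rw [cos_four_mul_pi_div_three]; norm_num
  · exact hodd 5 (by decide)
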